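/- Fix positive integers M and K, complex column vectors h_1,…,h_K ∈ ℂ^M, a real constant c > 0, and equal target rates r_k = r_G > 0 for all k. Let π be a permutation of {1,…,K}, let u ∈ {1,…,K−1}, write p = π(u), o = π(u+1), and T_{o,p} = {π(u+2),…,π(K)}. Suppose R_o^{{p}∪T_{o,p}} ≥ R_p^{{o}∪T_{o,p}}, i.e., among the two users at positions u and u+1, user o has the higher achievable rate when all later users (and the other of the two) interfere. Let π' be the permutation obtained from π by swapping positions u and u+1 (so π'(u) = o, π'(u+1) = p, and π' = π elsewhere). Then |S*_SIC(π')| ≥ |S*_SIC(π)|: putting the higher-rate user first never decreases the number of SIC-decodable users in an equal-rate system. -/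

import Mathlib

/-!
Only positions `u` and `u + 1` of the decoding order change. After the swap, `o` is decoded at
position `u` against `{p} ∪ T`, where by hypothesis its rate dominates the rate `p` had there;
`p` is decoded at position `u + 1` against `T` alone, and dropping an interferer can only raise a
single-user rate: by the matrix determinant lemma `R_k^T = log₂ (1 + c h_kᴴ (I + c G_T)⁻¹ h_k)`,
and `v ↦ vᴴ P⁻¹ v` decreases as `P` grows in the Loewner order.
-/

open Matrix BigOperators

/-- `gram h T = ∑ k ∈ T, h k (h k)^H`, the Gram (interference covariance) matrix of the
channel vectors of the users in `T`. -/
noncomputable def gram {M K : ℕ} (h : Fin K → Fin M → ℂ)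
    (T : Finset (Fin K)) : Matrix (Fin M) (Fin M) ℂ :=
  ∑ k ∈ T, Matrix.vecMulVec (h k) (star (h k))

/-- Achievable (sum) rate of the user group `S` under interference from the user group `T`:
`R_S^T = log₂ (det (I + c (G_S + G_T)) / det (I + c G_T))`, both determinants being
positive reals (as determinants of `I` plus a positive semidefinite Hermitian matrix). -/
noncomputable def rate {M K : ℕ} (h : Fin K → Fin M → ℂ) (c : ℝ)
    (S T : Finset (Fin K)) : ℝ :=
  Real.logb 2
    (((1 + (c : ℂ) • (gram h S + gram h T)).det).re /
      ((1 + (c : ℂ) • gram h T).det).re)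

open scoped Classical

/-- The number of users successfully decoded by successive interference cancellation with
decoding order `e` at target rates `r`: with `T_u = {e v : v > u}`, it is `u* - 1` where
`u*` is the first position at which `r (e u) > R_{e u}^{T_u}` (and `K` if no position
fails), i.e. the cardinality of the SIC-decodable set `S*_SIC = {e 1, …, e (u*-1)}`. -/
noncomputable def sicCount {M K : ℕ} (h : Fin K → Fin M → ℂ) (c : ℝ)
    (r : Fin K → ℝ) (e : Equiv.Perm (Fin K)) : ℕ :=
  (Finset.univ.filter (fun u : Fin K =>
    ∀ v ≤ u, r (e v) ≤ rate h c {e v} ((Finset.Ioi v).image e))).card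

open scoped ComplexOrder

namespace Matrix

lemma IsHermitian.star_mulVec_dotProduct {n α : Type*} [Fintype n] [CommSemiring α] [StarRing α]
    {P : Matrix n n α} (hP : P.IsHermitian) (a b : n → α) :
    star (P *ᵥ a) ⬝ᵥ b = star a ⬝ᵥ (P *ᵥ b) := by
  rw [star_mulVec, ← dotProduct_mulVec, hP.eq]

lemma det_add_vecMulVec {m α : Type*} [Fintype m] [DecidableEq m] [CommRing α]
    {P : Matrix m m α} (hP : IsUnit P.det) (a b : m → α) :
    (P + vecMulVec a b).det = P.det * (1 + b ⬝ᵥ (P⁻¹ *ᵥ a)) := by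
  rw [vecMulVec_eq Unit, det_add_replicateCol_mul_replicateRow hP]
  congr 1
  rw [det_unique, add_apply, one_apply_eq, ← replicateRow_vecMul,
    replicateRow_mul_replicateCol_apply, ← dotProduct_mulVec]

variable {n 𝕜 : Type*} [Fintype n] [DecidableEq n] [RCLike 𝕜]

lemma PosDef.add_sub_le_dotProduct_inv_mulVec {P : Matrix n n 𝕜} (hP : P.PosDef)
    (v x : n → 𝕜) :
    star x ⬝ᵥ v + star v ⬝ᵥ x - star x ⬝ᵥ (P *ᵥ x) ≤ star v ⬝ᵥ (P⁻¹ *ᵥ v) := by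
  set w := P⁻¹ *ᵥ v
  have hPw : P *ᵥ w = v := by
    rw [mulVec_mulVec, mul_nonsing_inv _ hP.det_pos.ne'.isUnit, one_mulVec]
  have hsq : star v ⬝ᵥ w - (star x ⬝ᵥ v + star v ⬝ᵥ x - star x ⬝ᵥ (P *ᵥ x)) =
      star (x - w) ⬝ᵥ (P *ᵥ (x - w)) := by
    have hwx := hP.isHermitian.star_mulVec_dotProduct w x
    have hww := hP.isHermitian.star_mulVec_dotProduct w w
    rw [hPw] at hwx hww
    rw [mulVec_sub, hPw, star_sub, sub_dotProduct, dotProduct_sub, dotProduct_sub, ← hwx, hww]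
    ring
  exact sub_nonneg.mp (hsq ▸ hP.posSemidef.dotProduct_mulVec_nonneg _)

lemma PosDef.dotProduct_inv_add_mulVec_le {P Q : Matrix n n 𝕜} (hP : P.PosDef)
    (hQ : Q.PosSemidef) (v : n → 𝕜) :
    star v ⬝ᵥ ((P + Q)⁻¹ *ᵥ v) ≤ star v ⬝ᵥ (P⁻¹ *ᵥ v) := by
  set y := (P + Q)⁻¹ *ᵥ v
  have hy : (P + Q) *ᵥ y = v := by
    rw [mulVec_mulVec, mul_nonsing_inv _ (hP.add_posSemidef hQ).det_pos.ne'.isUnit, one_mulVec]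
  -- the bound of `add_sub_le_dotProduct_inv_mulVec` for `P + Q` is attained at `x = y`
  calc star v ⬝ᵥ y
      = star y ⬝ᵥ v + star v ⬝ᵥ y - star y ⬝ᵥ (P *ᵥ y) - star y ⬝ᵥ (Q *ᵥ y) := by
        rw [← hy, add_mulVec, dotProduct_add]; ring
    _ ≤ star y ⬝ᵥ v + star v ⬝ᵥ y - star y ⬝ᵥ (P *ᵥ y) :=
        sub_le_self _ (hQ.dotProduct_mulVec_nonneg y)
    _ ≤ star v ⬝ᵥ (P⁻¹ *ᵥ v) := hP.add_sub_le_dotProduct_inv_mulVec v y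

end Matrix

section Rate

variable {M K : ℕ} (h : Fin K → Fin M → ℂ)

lemma gram_posSemidef (T : Finset (Fin K)) : (gram h T).PosSemidef :=
  posSemidef_sum T fun k _ => posSemidef_vecMulVec_self_star (h k)

lemma gram_insert {o : Fin K} {T : Finset (Fin K)} (ho : o ∉ T) :
    gram h (insert o T) = vecMulVec (h o) (star (h o)) + gram h T :=
  Finset.sum_insert ho

lemma posDef_one_add_smul_gram {c : ℝ} (hc : 0 ≤ c) (T : Finset (Fin K)) :
    (1 + (c : ℂ) • gram h T).PosDef :=
  PosDef.one.add_posSemidef ((gram_posSemidef h T).smul (Complex.zero_le_real.mpr hc))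

lemma rate_singleton {c : ℝ} (hc : 0 ≤ c) (k : Fin K) (T : Finset (Fin K)) :
    rate h c {k} T =
      Real.logb 2 (1 + c * (star (h k) ⬝ᵥ ((1 + (c : ℂ) • gram h T)⁻¹ *ᵥ h k)).re) := by
  set P := 1 + (c : ℂ) • gram h T with hPdef
  have hP := posDef_one_add_smul_gram h hc T
  have hsplit : 1 + (c : ℂ) • (gram h {k} + gram h T) =
      P + vecMulVec ((c : ℂ) • h k) (star (h k)) := by
    rw [_root_.gram, Finset.sum_singleton, smul_add, smul_vecMulVec, hPdef]
    abel
  have hdet_real : P.det = (P.det.re : ℂ) :=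
    Complex.eq_re_of_ofReal_le (by exact_mod_cast hP.det_pos.le)
  have hdet_ne : P.det.re ≠ 0 := fun h0 =>
    hP.det_pos.ne' (by rw [hdet_real, h0, Complex.ofReal_zero])
  rw [rate, hsplit, det_add_vecMulVec hP.det_pos.ne'.isUnit, mulVec_smul, dotProduct_smul]
  nth_rewrite 1 [hdet_real]
  rw [Complex.re_ofReal_mul, mul_div_cancel_left₀ _ hdet_ne, smul_eq_mul, Complex.add_re,
    Complex.one_re, Complex.re_ofReal_mul]

lemma rate_singleton_insert_le {c : ℝ} (hc : 0 ≤ c) (k o : Fin K) (T : Finset (Fin K)) :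
    rate h c {k} (insert o T) ≤ rate h c {k} T := by
  by_cases ho : o ∈ T
  · rw [Finset.insert_eq_of_mem ho]
  have hsplit : 1 + (c : ℂ) • gram h (insert o T) =
      (1 + (c : ℂ) • gram h T) + (c : ℂ) • vecMulVec (h o) (star (h o)) := by
    rw [gram_insert h ho, smul_add]
    abel
  have hP := posDef_one_add_smul_gram h hc T
  have hQ := (posSemidef_vecMulVec_self_star (h o)).smul (Complex.zero_le_real.mpr hc)
  have hle := (Complex.le_def.mp (hP.dotProduct_inv_add_mulVec_le hQ (h k))).1
  have hnonneg := (Complex.nonneg_iff.mp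
    ((hP.add_posSemidef hQ).inv.posSemidef.dotProduct_mulVec_nonneg (h k))).1
  rw [rate_singleton h hc, rate_singleton h hc, hsplit]
  exact Real.logb_le_logb_of_le one_lt_two
    (add_pos_of_pos_of_nonneg one_pos (mul_nonneg hc hnonneg))
    (add_le_add_right (mul_le_mul_of_nonneg_left hle hc) 1)

end Rate

lemma Finset.image_swap_eq_self {α : Type*} [DecidableEq α] {s : Finset α} {a b : α}
    (h : a ∈ s ↔ b ∈ s) :
    s.image (Equiv.swap a b) = s := by
  ext x
  simp only [Finset.mem_image]
  grind

section Order

variable {α : Type*} [LinearOrder α] [LocallyFiniteOrderTop α]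

lemma CovBy.finset_Ioi_eq {a b : α} (hab : a ⋖ b) :
    Finset.Ioi a = insert b (Finset.Ioi b) := by
  rw [Finset.Ioi_insert]
  exact Finset.coe_injective (by simpa using hab.Ioi_eq)

lemma CovBy.image_Ioi_mul_swap {e : Equiv.Perm α} {a b v : α} (hab : a ⋖ b) (hv : v ≠ a) :
    (Finset.Ioi v).image (e * Equiv.swap a b) = (Finset.Ioi v).image e := by
  rw [Equiv.Perm.coe_mul, ← Finset.image_image, Finset.image_swap_eq_self]
  simp only [Finset.mem_Ioi]
  exact ⟨fun h => h.trans hab.lt, fun h => (hab.le_of_lt h).lt_of_ne hv⟩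

end Order

lemma sicCount_le_sicCount {M K : ℕ} {h : Fin K → Fin M → ℂ} {c : ℝ} {r : Fin K → ℝ}
    {e e' : Equiv.Perm (Fin K)}
    (H : ∀ v, (∀ w ≤ v, r (e w) ≤ rate h c {e w} ((Finset.Ioi w).image e)) →
      r (e' v) ≤ rate h c {e' v} ((Finset.Ioi v).image e')) :
    sicCount h c r e ≤ sicCount h c r e' :=
  Finset.card_le_card <| Finset.monotone_filter_right _ fun _ _ hu v hvu =>
    H v fun w hwv => hu w (hwv.trans hvu)

theorem stmt_8_general {M K : ℕ} (h : Fin K → Fin M → ℂ)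
    (c : ℝ) (hc : 0 < c) (r_G : ℝ)
    (e : Equiv.Perm (Fin K)) (u u' : Fin K) (hu : (u' : ℕ) = (u : ℕ) + 1)
    (hgo : rate h c {e u'} (insert (e u) ((Finset.Ioi u').image e)) ≥
        rate h c {e u} (insert (e u') ((Finset.Ioi u').image e))) :
    sicCount h c (fun _ => r_G) e ≤
      sicCount h c (fun _ => r_G) (e * Equiv.swap u u') := by
  have hcov : u ⋖ u' := Fin.covBy_iff.mpr (Nat.covBy_iff_add_one_eq.mpr hu.symm)
  set T := (Finset.Ioi u').image e
  have hIu : (Finset.Ioi u).image e = insert (e u') T := by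
    rw [hcov.finset_Ioi_eq, Finset.image_insert]
  have hIu' : (Finset.Ioi u').image (e * Equiv.swap u u') = T :=
    hcov.image_Ioi_mul_swap hcov.lt.ne'
  refine sicCount_le_sicCount fun v hdec => ?_
  rw [Equiv.Perm.mul_apply]
  rcases eq_or_ne v u with rfl | hvu
  · rw [Equiv.swap_apply_left, hcov.finset_Ioi_eq, Finset.image_insert, hIu',
      Equiv.Perm.mul_apply, Equiv.swap_apply_right]
    exact (hIu ▸ hdec v le_rfl).trans hgo
  rcases eq_or_ne v u' with rfl | hvu'
  · rw [Equiv.swap_apply_right, hIu']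
    exact (hIu ▸ hdec u hcov.lt.le).trans (rate_singleton_insert_le h hc.le _ _ _)
  · rw [hcov.image_Ioi_mul_swap hvu, Equiv.swap_apply_of_ne_of_ne hvu hvu']
    exact hdec v le_rfl

/-- Adjacent-transposition exchange step in the proof of Lemma 5.2: in an equal-rate system,
with `p = e u`, `o = e u'` the users at adjacent positions `u, u' = u + 1` and
`T_{o,p} = {e v : v > u'}` the later users, if
`R_o^{{p} ∪ T_{o,p}} ≥ R_p^{{o} ∪ T_{o,p}}` then swapping positions `u` and `u'`
(putting the higher-rate user `o` first) never decreases the number of SIC-decodable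
users. -/
theorem stmt_8 {M K : ℕ} (hM : 0 < M) (hK : 0 < K) (h : Fin K → Fin M → ℂ)
    (c : ℝ) (hc : 0 < c) (r_G : ℝ) (hrG : 0 < r_G)
    (e : Equiv.Perm (Fin K)) (u u' : Fin K) (hu : (u' : ℕ) = (u : ℕ) + 1)
    (hgo : rate h c {e u'} (insert (e u) ((Finset.Ioi u').image e)) ≥
        rate h c {e u} (insert (e u') ((Finset.Ioi u').image e))) :
    sicCount h c (fun _ => r_G) e ≤
      sicCount h c (fun _ => r_G) (e * Equiv.swap u u') :=
  stmt_8_general h c hc r_G e u u' hu hgo
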